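/- arXiv:2511.22588 — 3 statements merged into one kernel-verified Lean document; each statement's English description precedes it below -/
import Mathlib

section
/- Let u be a word over an ordered alphabet A with bwt_A(u) = b_1 b_2 ⋯ b_m (where m = |u| and each b_i ∈ A), and let p ≥ 1. A word w over A is a conjugate of u^p if and only if bwt_A(w) = b_1^p b_2^p ⋯ b_m^p. -/
/-!
For `i ≤ |u|` the rotation of `u^p` by `i` is `(u.rotate i)^p`, and rotations of `u^p` are
periodic in `i` with period `|u|`; so the rotations of `u^p` are the `p`-th powers of the
rotations of `u`, each taken `p` times. Since `x ↦ x^p` is monotone on words of equal length,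
the sorted rotations of `u^p` are those of `u`, each `x` replaced by `p` copies of `x^p`, and
reading off last letters gives `bwt (u^p) = b₁^p ⋯ b_m^p`. Conjugate words have the same
rotations, hence the same BWT.

Conversely, the BWT and the length determine the sorted list of rotations (inverse BWT):
prepending the BWT letters to the sorted `k`-prefixes of the rotations and sorting gives the
sorted `(k+1)`-prefixes. Hence two words of equal length with equal BWT have the same
rotations and are conjugate.
-/

/-- `wordPow u p` is the `p`-fold concatenation `u^p`. -/
def wordPow {A : Type*} (u : List A) : ℕ → List A
  | 0 => []
  | n + 1 => u ++ wordPow u n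

/-- A word is primitive if it is not a proper integer power of another word. -/
def Primitive {A : Type*} (w : List A) : Prop :=
  ∀ (v : List A) (m : ℕ), w = wordPow v m → m = 1

/-- The Burrows–Wheeler transform of a word: the last letters of its cyclic rotations
listed in non-decreasing lexicographic order. -/
def bwt {A : Type*} [LinearOrder A] (w : List A) : List A :=
  (Multiset.sort
    (((List.range w.length).map (fun i => w.rotate i) : List (List A)) : Multiset (List A)) (· ≤ ·)).filterMap
    List.getLast?

/-- `w` is `π`-clustering: its BWT is `π(a₁)^{k₁} ⋯ π(a_k)^{k_k}` where `a₁ < … < a_k`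
enumerates the alphabet and `k_i` is the number of occurrences of `π(a_i)` in `w`. -/
def Clustering {A : Type*} [LinearOrder A] [Fintype A] (π : Equiv.Perm A) (w : List A) : Prop :=
  bwt w =
    ((Finset.univ.sort (· ≤ ·)).map (fun a => List.replicate (w.count (π a)) (π a))).flatten

open List

section Lists

variable {A : Type*}

theorem exists_append_eq_iff_isRotated {v w : List A} :
    (∃ s t : List A, v = s ++ t ∧ w = t ++ s) ↔ v ~r w := by
  constructor
  · rintro ⟨s, t, rfl, rfl⟩
    exact isRotated_append
  · intro h
    obtain ⟨n, hn, rfl⟩ := isRotated_iff_mod.mp h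
    exact ⟨v.take n, v.drop n, (take_append_drop n v).symm, rotate_eq_drop_append_take hn⟩

theorem filterMap_getLast?_eq_map_getLastD (a : A) {l : List (List A)}
    (hl : ∀ x ∈ l, x ≠ []) : l.filterMap getLast? = l.map (·.getLastD a) := by
  rw [← filterMap_eq_map]
  refine filterMap_congr fun x hx => ?_
  obtain ⟨y, b, rfl⟩ := (eq_nil_or_concat' x).resolve_left (hl x hx)
  simp

theorem take_succ_rotate_of_length_eq_succ {x : List A} {n k : ℕ} (hx : x.length = n + 1)
    (hk : k ≤ n) (a : A) : (x.rotate n).take (k + 1) = x.getLastD a :: x.take k := by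
  obtain ⟨y, b, rfl⟩ := (eq_nil_or_concat' x).resolve_left (ne_nil_of_length_eq_add_one hx)
  obtain rfl : y.length = n := by simpa using hx
  rw [rotate_append_length_eq, getLastD_concat, singleton_append, take_succ_cons,
    take_append_of_le_length hk]

end Lists

section WordPow

variable {A : Type*}

theorem length_wordPow (u : List A) (p : ℕ) : (wordPow u p).length = p * u.length := by
  induction p with
  | zero => simp [wordPow]
  | succ p ih => rw [wordPow, length_append, ih, Nat.succ_mul, add_comm]

theorem append_wordPow_eq_wordPow_append (s t : List A) (p : ℕ) :
    s ++ wordPow (t ++ s) p = wordPow (s ++ t) p ++ s := by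
  induction p with
  | zero => simp [wordPow]
  | succ p ih => simp only [wordPow, append_assoc, ih]

theorem wordPow_succ' (u : List A) (p : ℕ) : wordPow u (p + 1) = wordPow u p ++ u := by
  rw [wordPow]
  simpa using append_wordPow_eq_wordPow_append u [] p

theorem getLast?_wordPow (u : List A) {p : ℕ} (hp : 1 ≤ p) :
    (wordPow u p).getLast? = u.getLast? := by
  induction p, hp using Nat.le_induction with
  | base => simp [wordPow]
  | succ p _ ih => rw [wordPow_succ', getLast?_append, ih, Option.or_self]

theorem rotate_length_wordPow_append (s t : List A) (p : ℕ) :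
    (wordPow (s ++ t) p).rotate s.length = wordPow (t ++ s) p := by
  cases p with
  | zero => simp [wordPow]
  | succ p =>
    rw [wordPow, append_assoc, rotate_append_length_eq, append_assoc,
      ← append_wordPow_eq_wordPow_append, ← append_assoc, wordPow]

theorem rotate_wordPow (u : List A) (p : ℕ) {i : ℕ} (hi : i ≤ u.length) :
    (wordPow u p).rotate i = wordPow (u.rotate i) p := by
  have h := rotate_length_wordPow_append (u.take i) (u.drop i) p
  rwa [take_append_drop, length_take_of_le hi, ← rotate_eq_drop_append_take hi] at h

theorem periodic_rotate_wordPow (u : List A) (p : ℕ) :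
    Function.Periodic (wordPow u p).rotate u.length := fun i => by
  rw [add_comm, ← rotate_rotate, rotate_wordPow u p le_rfl, rotate_length]

end WordPow

section Lex

variable {A : Type*}

theorem append_lt_append_of_lt [LT A] {x y : List A} (hl : x.length = y.length) (h : x < y)
    (s t : List A) : x ++ s < y ++ t := by
  induction x generalizing y with
  | nil =>
    obtain rfl := length_eq_zero_iff.mp hl.symm
    exact absurd h (not_lt_nil _)
  | cons a x ih =>
    cases y with
    | nil => simp at hl
    | cons b y =>
      rw [cons_lt_cons_iff] at h
      rw [cons_append, cons_append, cons_lt_cons_iff]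
      exact h.imp_right fun ⟨hab, hxy⟩ => ⟨hab, ih (by simpa using hl) hxy⟩

variable [LinearOrder A]

theorem take_le_take_of_le {x y : List A} (hl : x.length = y.length) (h : x ≤ y) (k : ℕ) :
    x.take k ≤ y.take k := by
  by_contra hlt
  have hk : (y.take k).length = (x.take k).length := by simp [hl]
  have := append_lt_append_of_lt hk (lt_of_not_ge hlt) (y.drop k) (x.drop k)
  rw [take_append_drop, take_append_drop] at this
  exact absurd h (not_le_of_gt this)

theorem wordPow_le_wordPow {x y : List A} (hl : x.length = y.length) (h : x ≤ y) (p : ℕ) :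
    wordPow x p ≤ wordPow y p := by
  rcases h.lt_or_eq with h | rfl
  · cases p with
    | zero => exact le_rfl
    | succ p => exact (append_lt_append_of_lt hl h _ _).le
  · exact le_rfl

end Lex

section FlattenReplicate

variable {α β : Type*}

theorem filterMap_flatten_map_replicate (f : α → Option β) (p : ℕ) (l : List α) :
    ((l.map (replicate p)).flatten).filterMap f = ((l.filterMap f).map (replicate p)).flatten := by
  induction l with
  | nil => rfl
  | cons a l ih =>
    rcases h : f a with _ | b <;> simp [h, ih]

theorem coe_flatten_map_replicate (p : ℕ) (l : List α) :
    (((l.map (replicate p)).flatten : List α) : Multiset α) = p • (l : Multiset α) := by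
  induction l with
  | nil => simp
  | cons a l ih =>
    rw [map_cons, flatten_cons, ← Multiset.coe_add, ih, ← Multiset.cons_coe,
      ← Multiset.singleton_add, nsmul_add, Multiset.nsmul_singleton, Multiset.coe_replicate]

theorem List.Pairwise.flatten_map_replicate {r : α → α → Prop} [Std.Refl r] {l : List α}
    (h : l.Pairwise r) (p : ℕ) : ((l.map (replicate p)).flatten).Pairwise r := by
  refine pairwise_flatten.mpr ⟨?_, ?_⟩
  · simp only [mem_map, forall_exists_index, and_imp, forall_apply_eq_imp_iff₂]
    exact fun a _ => pairwise_replicate.mpr (Or.inr (refl a))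
  · refine pairwise_map.mpr (h.imp fun hab x hx y hy => ?_)
    rwa [eq_of_mem_replicate hx, eq_of_mem_replicate hy]

theorem mem_of_mem_flatten_map_replicate {p : ℕ} {l : List α} {a : α}
    (h : a ∈ (l.map (replicate p)).flatten) : a ∈ l := by
  simp only [mem_flatten, mem_map] at h
  obtain ⟨_, ⟨b, hb, rfl⟩, ha⟩ := h
  rwa [eq_of_mem_replicate ha]

end FlattenReplicate

theorem Function.Periodic.map_range_mul {β : Type*} {f : ℕ → β} {m : ℕ}
    (hf : Function.Periodic f m) (p : ℕ) :
    (Multiset.range (p * m)).map f = p • (Multiset.range m).map f := by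
  induction p with
  | zero => simp
  | succ p ih =>
    rw [Nat.succ_mul, Multiset.range_add, Multiset.map_add, ih, succ_nsmul, Multiset.map_map]
    congr 2
    funext i
    simpa [add_comm] using hf.nat_mul p i

section Rotations

variable {A : Type*}

def rotations (w : List A) : List (List A) := (List.range w.length).map w.rotate

theorem length_rotations (w : List A) : (rotations w).length = w.length := by
  simp [rotations]

theorem length_of_mem_rotations {w x : List A} (h : x ∈ rotations w) : x.length = w.length := by
  obtain ⟨i, -, rfl⟩ := mem_map.mp h
  exact length_rotate w i

theorem isRotated_of_mem_rotations {w x : List A} (h : x ∈ rotations w) : w ~r x := by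
  obtain ⟨i, -, rfl⟩ := mem_map.mp h
  exact ⟨i, rfl⟩

theorem self_mem_rotations {w : List A} (hw : w ≠ []) : w ∈ rotations w :=
  mem_map.mpr ⟨0, mem_range.mpr (length_pos_iff.mpr hw), rotate_zero w⟩

theorem rotations_eq_cyclicPermutations {w : List A} (hw : w ≠ []) :
    rotations w = cyclicPermutations w :=
  ext_getElem (by rw [length_rotations, length_cyclicPermutations_of_ne_nil w hw])
    fun i _ _ => by simp [rotations, getElem_cyclicPermutations]

theorem List.IsRotated.rotations_perm {w v : List A} (h : w ~r v) : rotations w ~ rotations v := by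
  rcases eq_or_ne w [] with rfl | hw
  · rw [isRotated_nil_iff'.mp h]
  have hv : v ≠ [] := fun hv => hw (isRotated_nil_iff.mp (hv ▸ h))
  rw [rotations_eq_cyclicPermutations hw, rotations_eq_cyclicPermutations hv]
  exact h.cyclicPermutations.perm

theorem map_rotate_rotations_perm (w : List A) (j : ℕ) :
    (rotations w).map (·.rotate j) ~ rotations w := by
  have : (rotations w).map (·.rotate j) = rotations (w.rotate j) := by
    simp only [rotations, length_rotate, map_map]
    exact map_congr_left fun i _ => by simp [rotate_rotate, add_comm]
  rw [this]
  exact IsRotated.rotations_perm (IsRotated.forall w j)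

theorem coe_rotations_wordPow (u : List A) (p : ℕ) :
    (rotations (wordPow u p) : Multiset (List A)) =
      p • ((rotations u).map (wordPow · p) : Multiset (List A)) := by
  rw [rotations, length_wordPow, ← Multiset.map_coe, Multiset.coe_range,
    (periodic_rotate_wordPow u p).map_range_mul, rotations, map_map, ← Multiset.map_coe,
    Multiset.coe_range]
  congr 1
  exact Multiset.map_congr rfl fun i hi =>
    rotate_wordPow u p (Multiset.mem_range.mp hi).le

end Rotations

section SortedRotations

variable {A : Type*} [LinearOrder A]

def sortedRotations (w : List A) : List (List A) :=
  Multiset.sort (rotations w : Multiset (List A)) (· ≤ ·)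

theorem bwt_eq_filterMap_sortedRotations (w : List A) :
    bwt w = (sortedRotations w).filterMap getLast? := rfl

theorem perm_sortedRotations (w : List A) : sortedRotations w ~ rotations w :=
  Multiset.coe_eq_coe.mp (Multiset.sort_eq _ _)

theorem pairwise_sortedRotations (w : List A) : (sortedRotations w).Pairwise (· ≤ ·) :=
  Multiset.pairwise_sort _ _

theorem length_of_mem_sortedRotations {w x : List A} (h : x ∈ sortedRotations w) :
    x.length = w.length :=
  length_of_mem_rotations ((perm_sortedRotations w).mem_iff.mp h)

theorem length_sortedRotations (w : List A) : (sortedRotations w).length = w.length := by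
  rw [(perm_sortedRotations w).length_eq, length_rotations]

theorem ne_nil_of_mem_sortedRotations {w x : List A} (hw : w ≠ []) (h : x ∈ sortedRotations w) :
    x ≠ [] :=
  ne_nil_of_length_pos ((length_of_mem_sortedRotations h).symm ▸ length_pos_iff.mpr hw)

theorem List.IsRotated.bwt_eq {w v : List A} (h : w ~r v) : bwt w = bwt v := by
  rw [bwt, bwt, ← rotations, ← rotations, Multiset.coe_eq_coe.mpr h.rotations_perm]

theorem length_bwt (w : List A) : (bwt w).length = w.length := by
  rcases eq_or_ne w [] with rfl | hw
  · simp [bwt]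
  obtain ⟨a, -⟩ := exists_mem_of_ne_nil w hw
  rw [bwt_eq_filterMap_sortedRotations,
    filterMap_getLast?_eq_map_getLastD a fun _ => ne_nil_of_mem_sortedRotations hw, length_map,
    length_sortedRotations]

theorem sortedRotations_wordPow (u : List A) (p : ℕ) :
    sortedRotations (wordPow u p) =
      (((sortedRotations u).map (replicate p)).flatten).map (wordPow · p) := by
  refine Perm.eq_of_pairwise' (pairwise_sortedRotations _) ?_ ?_
  · refine pairwise_map.mpr (((pairwise_sortedRotations u).flatten_map_replicate p).imp_of_mem ?_)
    intro x y hx hy hxy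
    have hx' := length_of_mem_sortedRotations (mem_of_mem_flatten_map_replicate hx)
    have hy' := length_of_mem_sortedRotations (mem_of_mem_flatten_map_replicate hy)
    exact wordPow_le_wordPow (hx'.trans hy'.symm) hxy p
  · rw [← Multiset.coe_eq_coe, ← Multiset.map_coe, coe_flatten_map_replicate,
      Multiset.coe_eq_coe.mpr (perm_sortedRotations _),
      Multiset.coe_eq_coe.mpr (perm_sortedRotations _),
      coe_rotations_wordPow, Multiset.map_nsmul, Multiset.map_coe]

theorem bwt_wordPow (u : List A) {p : ℕ} (hp : 1 ≤ p) :
    bwt (wordPow u p) = ((bwt u).map (replicate p)).flatten := by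
  have hlast : getLast? ∘ (wordPow · p) = (getLast? : List A → Option A) :=
    funext fun x => getLast?_wordPow x hp
  rw [bwt_eq_filterMap_sortedRotations, sortedRotations_wordPow, filterMap_map, hlast,
    filterMap_flatten_map_replicate, bwt_eq_filterMap_sortedRotations]

end SortedRotations

section Inversion

variable {A : Type*} [LinearOrder A]

theorem pairwise_map_take_sortedRotations (w : List A) (k : ℕ) :
    ((sortedRotations w).map (take k)).Pairwise (· ≤ ·) :=
  pairwise_map.mpr <| (pairwise_sortedRotations w).imp_of_mem fun hx hy hxy =>
    take_le_take_of_le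
      ((length_of_mem_sortedRotations hx).trans (length_of_mem_sortedRotations hy).symm) hxy k

def invBwtStep (b : List A) (L : List (List A)) : List (List A) :=
  Multiset.sort (zipWith cons b L : Multiset (List A)) (· ≤ ·)

theorem map_take_succ_sortedRotations {w : List A} {k : ℕ} (hk : k < w.length) :
    (sortedRotations w).map (take (k + 1)) =
      invBwtStep (bwt w) ((sortedRotations w).map (take k)) := by
  obtain ⟨n, hn⟩ : ∃ n, w.length = n + 1 := ⟨w.length - 1, by omega⟩
  have hw : w ≠ [] := ne_nil_of_length_pos (by omega)
  obtain ⟨a, -⟩ := exists_mem_of_ne_nil w hw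
  refine Perm.eq_of_pairwise' (pairwise_map_take_sortedRotations w _)
    (Multiset.pairwise_sort _ _) ?_
  -- Rotating every rotation right by one brings its BWT letter to the front.
  calc (sortedRotations w).map (take (k + 1))
      ~ (rotations w).map (take (k + 1)) := (perm_sortedRotations w).map _
    _ ~ ((rotations w).map (·.rotate n)).map (take (k + 1)) :=
        ((map_rotate_rotations_perm w n).map _).symm
    _ = (rotations w).map (fun x => x.getLastD a :: x.take k) := by
        rw [map_map]
        exact map_congr_left fun x hx => take_succ_rotate_of_length_eq_succ
          ((length_of_mem_rotations hx).trans hn) (by omega) a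
    _ ~ (sortedRotations w).map (fun x => x.getLastD a :: x.take k) :=
        ((perm_sortedRotations w).map _).symm
    _ = zipWith cons (bwt w) ((sortedRotations w).map (take k)) := by
        rw [bwt_eq_filterMap_sortedRotations, filterMap_getLast?_eq_map_getLastD a
          fun _ => ne_nil_of_mem_sortedRotations hw,
          zipWith_map, zipWith_self]
    _ ~ invBwtStep (bwt w) ((sortedRotations w).map (take k)) :=
        (Multiset.coe_eq_coe.mp (Multiset.sort_eq _ _)).symm

theorem map_take_sortedRotations_eq_iterate {w : List A} {k : ℕ} (hk : k ≤ w.length) :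
    (sortedRotations w).map (take k) = (invBwtStep (bwt w))^[k] (replicate w.length []) := by
  induction k with
  | zero =>
    rw [Function.iterate_zero_apply, eq_replicate_iff]
    simp [length_sortedRotations]
  | succ k ih =>
    rw [Function.iterate_succ_apply', ← ih (by omega), map_take_succ_sortedRotations (by omega)]

theorem sortedRotations_eq_iterate (w : List A) :
    sortedRotations w = (invBwtStep (bwt w))^[w.length] (replicate w.length []) := by
  rw [← map_take_sortedRotations_eq_iterate le_rfl]
  conv_lhs => rw [← map_id (sortedRotations w)]
  exact map_congr_left fun x hx => (take_of_length_le (length_of_mem_sortedRotations hx).le).symm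

theorem isRotated_of_bwt_eq {v w : List A} (hl : v.length = w.length) (h : bwt v = bwt w) :
    v ~r w := by
  rcases eq_or_ne w [] with rfl | hw
  · rw [length_eq_zero_iff.mp hl]
  have hsorted : sortedRotations w = sortedRotations v := by
    rw [sortedRotations_eq_iterate, sortedRotations_eq_iterate v, h, hl]
  have hmem : w ∈ sortedRotations w :=
    (perm_sortedRotations w).mem_iff.mpr (self_mem_rotations hw)
  rw [hsorted] at hmem
  exact isRotated_of_mem_rotations ((perm_sortedRotations v).mem_iff.mp hmem)

end Inversion

/-- A word `w` is a conjugate of `u^p` if and only if `bwt w` is obtained from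
`bwt u = b₁ ⋯ b_m` by replacing each letter `bᵢ` by `bᵢ^p`. -/
theorem conjugate_pow_iff_bwt {A : Type*} [LinearOrder A] (u w : List A) (p : ℕ)
    (hp : 1 ≤ p) :
    (∃ s t : List A, wordPow u p = s ++ t ∧ w = t ++ s) ↔
      bwt w = ((bwt u).map (fun b => List.replicate p b)).flatten := by
  rw [exists_append_eq_iff_isRotated, ← bwt_wordPow u hp]
  refine ⟨fun h => h.bwt_eq.symm, fun h => isRotated_of_bwt_eq ?_ h.symm⟩
  rw [← length_bwt, ← length_bwt w, h]
end

section
/- Let T be a k-IET (k ≥ 2) on I = [ℓ, r) over the ordered alphabet A = {a_1 < … < a_k} with permutation π, and suppose |I_{a_1}| = |I_{π(a_1)}| and π(a_1) ≠ a_1. Let I' = [ℓ + |I_{a_1}|, r), A' = A \ {a_1}, and define T' : I' → I' by T'(x) = T²(x) if x ∈ I_{π(a_1)} and T'(x) = T(x) otherwise. Then: (1) T' is the first-return map of T to I'; (2) T' is a (k−1)-IET on I' with partition (I_a)_{a ∈ A'} and permutation π' of A' given by π'(a) = π(a_1) if a = π⁻¹(a_1) and π'(a) = π(a) otherwise; (3)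 for all x ∈ I', Ω_T(x) = φ(Ω_{T'}(x)), where φ is the monoid morphism on infinite words with φ(π(a_1)) = π(a_1) a_1 and φ(c) = c for every letter c ≠ π(a_1). -/
/-- An interval exchange transformation on `[l, l + Σ len a)` over the ordered alphabet `A`,
with subinterval lengths `len` and permutation `perm`. -/
structure IET (A : Type*) [Fintype A] [LinearOrder A] where
  l : ℝ
  len : A → ℝ
  len_pos : ∀ a, 0 < len a
  perm : Equiv.Perm A

namespace IET

variable {A : Type*} [Fintype A] [LinearOrder A] (T : IET A)

/-- Right endpoint of the domain interval. -/
def right : ℝ := T.l + ∑ a, T.len a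

/-- The domain `[ℓ, r)` of the IET. -/
def domain : Set ℝ := Set.Ico T.l T.right

/-- Left endpoint of the subinterval indexed by `a`. -/
def leftEnd (a : A) : ℝ := T.l + ∑ b ∈ Finset.univ.filter (· < a), T.len b

/-- The subinterval `I_a`. -/
def seg (a : A) : Set ℝ := Set.Ico (T.leftEnd a) (T.leftEnd a + T.len a)

/-- Translation amount on `I_a`. -/
def τ (a : A) : ℝ :=
  (∑ b ∈ Finset.univ.filter (fun b => T.perm.symm b < T.perm.symm a), T.len b)
    - (∑ b ∈ Finset.univ.filter (· < a), T.len b)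

open scoped Classical in
/-- The interval exchange transformation as a map `ℝ → ℝ` (identity off the domain). -/
noncomputable def map (x : ℝ) : ℝ :=
  if h : ∃ a, x ∈ T.seg a then x + T.τ h.choose else x

/-- The inverse transformation. -/
noncomputable def inv : ℝ → ℝ := Function.invFun T.map

open scoped Classical in
/-- The letter of the subinterval containing `x`. -/
noncomputable def idx [Nonempty A] (x : ℝ) : A :=
  if h : ∃ a, x ∈ T.seg a then h.choose else Classical.arbitrary A

/-- The trajectory (natural coding) `Ω_T(x)` of `x`. -/
noncomputable def traj [Nonempty A] (x : ℝ) (n : ℕ) : A := T.idx (T.map^[n] x)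

/-- The language of the IET: all finite factors of all trajectories. -/
def lang [Nonempty A] : Set (List A) :=
  { v | ∃ x ∈ T.domain, ∃ i : ℕ, v = (List.range v.length).map (fun j => T.traj x (i + j)) }

/-- The cylinder `I_w` of a word `w`. -/
def cyl (w : List A) : Set ℝ :=
  { x | ∀ i : Fin w.length, T.map^[(i : ℕ)] x ∈ T.seg (w.get i) }

/-- Formal discontinuities of `T`. -/
def D : Set ℝ := { y | (∃ a, y = T.leftEnd a) ∧ y ≠ T.l }

/-- Formal discontinuities of the inverse of `T`. -/
def Dinv : Set ℝ :=
  { y | (∃ a, y = T.l + ∑ b ∈ Finset.univ.filter (fun b => T.perm.symm b < T.perm.symm a), T.len b)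
      ∧ y ≠ T.l }

/-- `T^i` for an integer `i`. -/
noncomputable def iterZ (i : ℤ) (z : ℝ) : ℝ :=
  if 0 ≤ i then T.map^[i.toNat] z else T.inv^[(-i).toNat] z

/-- Forward return time `ρ⁺_{J,T}(z)` of `z` to the open interval `(u, v)`. -/
noncomputable def rhoPlus (u v z : ℝ) : ℕ := sInf {n : ℕ | 0 < n ∧ T.map^[n] z ∈ Set.Ioo u v}

/-- Backward return time `ρ⁻_{J,T}(z)` of `z` to the open interval `(u, v)`. -/
noncomputable def rhoMinus (u v z : ℝ) : ℕ := sInf {n : ℕ | T.inv^[n] z ∈ Set.Ioo u v}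

/-- The set `N_{J,T}(z)` for `J = [u, v)`. -/
noncomputable def Nset (u v z : ℝ) : Set ℝ :=
  { y | ∃ i : ℤ, -(T.rhoMinus u v z : ℤ) ≤ i ∧ i ≤ (T.rhoPlus u v z : ℤ) - 1 ∧ y = T.iterZ i z }

/-- The set `Div(J, T)` for `J = [u, v)`. -/
noncomputable def Div (u v : ℝ) : Set ℝ := ⋃ γ ∈ T.D, T.Nset u v γ

/-- The interval `[u, v)` is admissible for `T`. -/
noncomputable def Admissible (u v : ℝ) : Prop :=
  u ∈ T.Div u v ∪ {T.right} ∧ v ∈ T.Div u v ∪ {T.right}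

/-- Keane's regularity condition: the forward orbits of the formal discontinuities are
infinite and pairwise disjoint. -/
def Regular : Prop :=
  ∀ γ ∈ T.D, ∀ γ' ∈ T.D, ∀ m n : ℕ, T.map^[m] γ = T.map^[n] γ' → γ = γ' ∧ m = n

end IET

open scoped Classical in
/-- First return time of `x` to `J` under `f` (junk value `0` if it never returns). -/
noncomputable def returnTime (f : ℝ → ℝ) (J : Set ℝ) (x : ℝ) : ℕ :=
  if h : ∃ n, 0 < n ∧ f^[n] x ∈ J then Nat.find h else 0

/-- First return map of `f` to `J`. -/
noncomputable def firstReturn (f : ℝ → ℝ) (J : Set ℝ) (x : ℝ) : ℝ :=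
  f^[returnTime f J x] x

/-- A finite word is a prefix of an infinite word (a sequence). -/
def SeqPrefix {α : Type*} (l : List α) (f : ℕ → α) : Prop :=
  ∀ i : Fin l.length, l.get i = f i

namespace IET

variable {A : Type*} [Fintype A] [LinearOrder A] (T : IET A)

-- ### basic lemmas

lemma len_nonneg (a : A) : 0 ≤ T.len a := (T.len_pos a).le

lemma sum_len_nonneg (s : Finset A) : 0 ≤ ∑ b ∈ s, T.len b :=
  Finset.sum_nonneg fun b _ => T.len_nonneg b

lemma leftEnd_add_len_le {a c : A} (h : a < c) : T.leftEnd a + T.len a ≤ T.leftEnd c := by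
  unfold leftEnd
  have hsub : insert a (Finset.univ.filter (· < a)) ⊆ Finset.univ.filter (· < c) := by
    intro x hx
    simp only [Finset.mem_insert, Finset.mem_filter, Finset.mem_univ, true_and] at hx ⊢
    rcases hx with rfl | hx
    · exact h
    · exact hx.trans h
  have hna : a ∉ Finset.univ.filter (· < a) := by simp
  have := Finset.sum_le_sum_of_subset_of_nonneg hsub (fun x _ _ => T.len_nonneg x)
  rw [Finset.sum_insert hna] at this
  linarith

lemma seg_unique {a b : A} {x : ℝ} (ha : x ∈ T.seg a) (hb : x ∈ T.seg b) : a = b := by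
  rcases lt_trichotomy a b with h | h | h
  · exact absurd (lt_of_lt_of_le (lt_of_lt_of_le ha.2 (T.leftEnd_add_len_le h)) hb.1) (lt_irrefl x)
  · exact h
  · exact absurd (lt_of_lt_of_le (lt_of_lt_of_le hb.2 (T.leftEnd_add_len_le h)) ha.1) (lt_irrefl x)

lemma map_of_mem {a : A} {x : ℝ} (ha : x ∈ T.seg a) : T.map x = x + T.τ a := by
  have h : ∃ b, x ∈ T.seg b := ⟨a, ha⟩
  rw [map, dif_pos h, T.seg_unique h.choose_spec ha]

lemma idx_of_mem [Nonempty A] {a : A} {x : ℝ} (ha : x ∈ T.seg a) : T.idx x = a := by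
  have h : ∃ b, x ∈ T.seg b := ⟨a, ha⟩
  rw [idx, dif_pos h]
  exact T.seg_unique h.choose_spec ha

lemma exists_seg [Nonempty A] {x : ℝ} (hx : x ∈ T.domain) : ∃ a, x ∈ T.seg a := by
  classical
  set s : Finset A := Finset.univ.filter (fun a => T.leftEnd a ≤ x) with hs
  have hmin : (Finset.univ : Finset A).min' Finset.univ_nonempty ∈ s := by
    have : T.leftEnd ((Finset.univ : Finset A).min' Finset.univ_nonempty) = T.l := by
      unfold leftEnd
      have : Finset.univ.filter (· < (Finset.univ : Finset A).min' Finset.univ_nonempty) = ∅ := by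
        apply Finset.filter_false_of_mem
        intro b _
        exact not_lt.2 (Finset.min'_le _ b (Finset.mem_univ b))
      rw [this]; simp
    simp [hs, this, hx.1]
  have hsne : s.Nonempty := ⟨_, hmin⟩
  refine ⟨s.max' hsne, ?_, ?_⟩
  · have := s.max'_mem hsne
    simp [hs] at this
    exact this
  · set a := s.max' hsne with ha
    by_contra hcon
    push_neg at hcon
    set s' : Finset A := Finset.univ.filter (fun b => a < b) with hs'
    have key : T.leftEnd a + T.len a = T.l + ∑ b ∈ Finset.univ.filter (· ≤ a), T.len b := by
      unfold leftEnd
      have : Finset.univ.filter (· ≤ a) = insert a (Finset.univ.filter (· < a)) := by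
        ext b
        simp [le_iff_lt_or_eq, or_comm]
      rw [this, Finset.sum_insert (by simp)]
      ring
    rcases s'.eq_empty_or_nonempty with he | hne
    · have huniv : Finset.univ.filter (· ≤ a) = Finset.univ := by
        ext b
        simp only [Finset.mem_filter, Finset.mem_univ, true_and, iff_true]
        by_contra hb
        have : b ∈ s' := by simp [hs', lt_of_not_ge hb]
        simp [he] at this
      have : T.leftEnd a + T.len a = T.right := by rw [key, huniv]; rfl
      exact absurd (hx.2.trans_le (this ▸ hcon)) (lt_irrefl x)
    · set a' := s'.min' hne with ha'
      have haa' : a < a' := by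
        have := s'.min'_mem hne
        have h2 : a' ∈ Finset.filter (fun b => a < b) Finset.univ := this
        exact (Finset.mem_filter.1 h2).2
      have hfil : Finset.univ.filter (· < a') = Finset.univ.filter (· ≤ a) := by
        ext b
        simp only [Finset.mem_filter, Finset.mem_univ, true_and]
        constructor
        · intro hb
          by_contra hab
          have : b ∈ s' := by simp [hs', lt_of_not_ge hab]
          exact absurd (s'.min'_le b this) (not_le.2 hb)
        · intro hb
          exact lt_of_le_of_lt hb haa'
      have : T.leftEnd a' ≤ x := by
        unfold leftEnd
        rw [hfil, ← key]
        exact hcon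
      have ha's : a' ∈ s := by simp [hs, this]
      exact absurd (s.le_max' a' ha's) (not_le.2 haa')

/-- image left end -/
def ileft (a : A) : ℝ :=
  T.l + ∑ b ∈ Finset.univ.filter (fun b => T.perm.symm b < T.perm.symm a), T.len b

lemma map_mem_Ico {a : A} {x : ℝ} (ha : x ∈ T.seg a) :
    T.map x ∈ Set.Ico (T.ileft a) (T.ileft a + T.len a) := by
  rw [T.map_of_mem ha]
  obtain ⟨h1, h2⟩ := ha
  unfold leftEnd at h1 h2
  unfold ileft τ
  constructor
  · linarith
  · linarith

lemma ileft_add_len_le (a : A) : T.ileft a + T.len a ≤ T.right := by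
  unfold ileft right
  have hsub : insert a (Finset.univ.filter (fun b => T.perm.symm b < T.perm.symm a))
      ⊆ Finset.univ := by intro x _; simp
  have hna : a ∉ Finset.univ.filter (fun b => T.perm.symm b < T.perm.symm a) := by simp
  have := Finset.sum_le_sum_of_subset_of_nonneg hsub (fun x _ _ => T.len_nonneg x)
  rw [Finset.sum_insert hna] at this
  linarith

lemma map_mem_domain {x : ℝ} (hx : x ∈ T.domain) [Nonempty A] : T.map x ∈ T.domain := by
  obtain ⟨a, ha⟩ := T.exists_seg hx
  have h := T.map_mem_Ico ha
  constructor
  · have : T.l ≤ T.ileft a := by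
      unfold ileft
      have := T.sum_len_nonneg (Finset.univ.filter (fun b => T.perm.symm b < T.perm.symm a))
      linarith
    exact this.trans h.1
  · exact h.2.trans_le (T.ileft_add_len_le a)

end IET

namespace IET
variable {n : ℕ} (T : IET (Fin (n + 2)))

/-- auxiliary permutation fixing 0 -/
def sigma : Equiv.Perm (Fin (n + 2)) := T.perm.trans (Equiv.swap 0 (T.perm 0))

lemma sigma_apply (x : Fin (n + 2)) : T.sigma x = Equiv.swap 0 (T.perm 0) (T.perm x) := rfl

lemma sigma_zero : T.sigma 0 = 0 := by
  rw [sigma_apply, Equiv.swap_apply_right]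

lemma sigma_symm_apply (y : Fin (n + 2)) :
    T.sigma.symm y = T.perm.symm (Equiv.swap 0 (T.perm 0) y) := by
  rw [show T.sigma.symm y = T.perm.symm ((Equiv.swap 0 (T.perm 0)).symm y) from rfl,
    Equiv.symm_swap]

lemma sigma_symm_ne_zero {y : Fin (n + 2)} (hy : y ≠ 0) : T.sigma.symm y ≠ 0 := by
  intro h
  apply hy
  have := congrArg T.sigma h
  rwa [Equiv.apply_symm_apply, sigma_zero] at this

/-- the induced permutation on `Fin (n+1)` -/
def mperm : Equiv.Perm (Fin (n + 1)) := (Equiv.Perm.decomposeFin T.sigma).2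

lemma mperm_succ (a : Fin (n + 1)) : (T.mperm a).succ = T.sigma a.succ := by
  conv_rhs => rw [← Equiv.Perm.decomposeFin.symm_apply_apply T.sigma]
  have h1 : (Equiv.Perm.decomposeFin T.sigma).1 = T.sigma 0 := by
    conv_rhs => rw [← Equiv.Perm.decomposeFin.symm_apply_apply T.sigma]
    rw [show Equiv.Perm.decomposeFin T.sigma =
      ((Equiv.Perm.decomposeFin T.sigma).1, (Equiv.Perm.decomposeFin T.sigma).2) from rfl]
    rw [Equiv.Perm.decomposeFin_symm_apply_zero]
  rw [show Equiv.Perm.decomposeFin T.sigma =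
    ((Equiv.Perm.decomposeFin T.sigma).1, (Equiv.Perm.decomposeFin T.sigma).2) from rfl,
    Equiv.Perm.decomposeFin_symm_apply_succ]
  rw [show (Equiv.Perm.decomposeFin T.sigma).1 = (0 : Fin (n+2)) from h1.trans T.sigma_zero]
  rw [Equiv.swap_self]
  rfl

lemma mperm_symm_succ (b : Fin (n + 1)) : (T.mperm.symm b).succ = T.sigma.symm b.succ := by
  apply T.sigma.injective
  rw [Equiv.apply_symm_apply, ← T.mperm_succ, Equiv.apply_symm_apply]

variable (hlen : T.len 0 = T.len (T.perm 0)) (hne : T.perm 0 ≠ 0)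

include hlen in
lemma len_swap (b : Fin (n + 2)) : T.len (Equiv.swap 0 (T.perm 0) b) = T.len b := by
  rcases eq_or_ne b 0 with rfl | h0
  · rw [Equiv.swap_apply_left, hlen]
  rcases eq_or_ne b (T.perm 0) with rfl | hc
  · rw [Equiv.swap_apply_right, hlen]
  · rw [Equiv.swap_apply_of_ne_of_ne h0 hc]

/-- the merged IET -/
def merged : IET (Fin (n + 1)) where
  l := T.l + T.len 0
  len a := T.len a.succ
  len_pos a := T.len_pos a.succ
  perm := T.mperm

lemma merged_right : (T.merged).right = T.right := by
  unfold merged right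
  simp only
  conv_rhs => rw [Fin.sum_univ_succ]
  ring

lemma merged_leftEnd (a : Fin (n + 1)) : (T.merged).leftEnd a = T.leftEnd a.succ := by
  unfold merged leftEnd
  simp only
  rw [Finset.sum_filter, Finset.sum_filter]
  conv_rhs => rw [Fin.sum_univ_succ]
  rw [if_pos (Fin.succ_pos a)]
  have : ∀ b : Fin (n + 1), (if b.succ < a.succ then T.len b.succ else 0)
      = if b < a then T.len b.succ else 0 := by
    intro b
    simp [Fin.succ_lt_succ_iff]
  rw [Finset.sum_congr rfl fun b _ => this b]
  ring

lemma merged_seg (a : Fin (n + 1)) : (T.merged).seg a = T.seg a.succ := by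
  unfold seg
  rw [merged_leftEnd]
  rfl

include hlen in
lemma sum_top_reindex (t : Fin (n + 2)) (ht : t ≠ 0) :
    (∑ b : Fin (n + 2), if T.sigma.symm b < t ∧ b ≠ 0 then T.len b else 0)
      = (∑ b ∈ Finset.univ.filter (fun b => T.perm.symm b < t), T.len b) - T.len 0 := by
  rw [← Equiv.sum_comp (Equiv.swap 0 (T.perm 0))
    (fun b => if T.sigma.symm b < t ∧ b ≠ 0 then T.len b else 0)]
  have step : ∀ b : Fin (n + 2),
      (if T.sigma.symm (Equiv.swap 0 (T.perm 0) b) < t ∧ Equiv.swap 0 (T.perm 0) b ≠ 0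
        then T.len (Equiv.swap 0 (T.perm 0) b) else 0)
      = if T.perm.symm b < t ∧ b ≠ T.perm 0 then T.len b else 0 := by
    intro b
    rw [T.len_swap hlen]
    congr 1
    have h1 : T.sigma.symm (Equiv.swap 0 (T.perm 0) b) = T.perm.symm b := by
      rw [sigma_symm_apply, Equiv.swap_apply_self]
    have h2 : (Equiv.swap 0 (T.perm 0) b ≠ 0) = (b ≠ T.perm 0) := by
      simp [Equiv.swap_apply_eq_iff, Equiv.swap_apply_right]
    rw [h1, h2]
  rw [Finset.sum_congr rfl fun b _ => step b]
  rw [Finset.sum_filter]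
  have hc : T.perm.symm (T.perm 0) < t := by
    rw [Equiv.symm_apply_apply]
    exact Fin.pos_of_ne_zero ht
  have split : ∀ b : Fin (n + 2),
      (if T.perm.symm b < t ∧ b ≠ T.perm 0 then T.len b else 0)
      = (if T.perm.symm b < t then T.len b else 0)
        - (if b = T.perm 0 then T.len b else 0) := by
    intro b
    rcases eq_or_ne b (T.perm 0) with rfl | hb
    · simp [hc, Fin.pos_of_ne_zero ht]
    · simp [hb]
  rw [Finset.sum_congr rfl fun b _ => split b, Finset.sum_sub_distrib]
  rw [Finset.sum_ite_eq' Finset.univ (T.perm 0) T.len]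
  simp [hlen]

include hlen in
lemma merged_tau (a : Fin (n + 1)) :
    (T.merged).τ a =
      (∑ b ∈ Finset.univ.filter (fun b => T.perm.symm b < T.sigma.symm a.succ), T.len b)
        - (∑ b ∈ Finset.univ.filter (· < a.succ), T.len b) := by
  unfold τ merged
  simp only
  have htop : (∑ b ∈ Finset.univ.filter (fun b => T.mperm.symm b < T.mperm.symm a),
      T.len b.succ)
      = ∑ b : Fin (n + 2), if T.sigma.symm b < T.sigma.symm a.succ ∧ b ≠ 0
        then T.len b else 0 := by
    rw [Fin.sum_univ_succ]
    rw [if_neg (by simp)]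
    rw [Finset.sum_filter]
    rw [zero_add]
    apply Finset.sum_congr rfl
    intro b _
    have : (T.sigma.symm b.succ < T.sigma.symm a.succ ∧ b.succ ≠ (0 : Fin (n+2)))
        = (T.mperm.symm b < T.mperm.symm a) := by
      rw [← T.mperm_symm_succ, ← T.mperm_symm_succ]
      simp [Fin.succ_lt_succ_iff, Fin.succ_ne_zero]
    exact (if_congr this.to_iff rfl rfl).symm
  have hbot : (∑ b ∈ Finset.univ.filter (· < a), T.len b.succ)
      = (∑ b ∈ Finset.univ.filter (· < a.succ), T.len b) - T.len 0 := by
    rw [Finset.sum_filter, Finset.sum_filter]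
    conv_rhs => rw [Fin.sum_univ_succ]
    rw [if_pos (Fin.succ_pos a)]
    have : ∀ b : Fin (n + 1), (if b.succ < a.succ then T.len b.succ else 0)
        = if b < a then T.len b.succ else 0 := by
      intro b; simp [Fin.succ_lt_succ_iff]
    rw [Finset.sum_congr rfl fun b _ => this b]
    ring
  rw [htop, hbot, T.sum_top_reindex hlen _ (T.sigma_symm_ne_zero (Fin.succ_ne_zero a))]
  ring

end IET

set_option linter.unusedSectionVars false
namespace IET
variable {n : ℕ} (T : IET (Fin (n + 2)))

lemma filter_lt_zero_Fin : (Finset.univ.filter (· < (0 : Fin (n + 2)))) = ∅ :=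
  Finset.filter_false_of_mem fun b _ => by simp

lemma leftEnd_zero : T.leftEnd 0 = T.l := by
  unfold leftEnd
  rw [filter_lt_zero_Fin]
  simp

lemma seg_zero : T.seg 0 = Set.Ico T.l (T.l + T.len 0) := by
  unfold seg
  rw [leftEnd_zero]

lemma tau_perm_zero : T.τ (T.perm 0) = -(∑ b ∈ Finset.univ.filter (· < T.perm 0), T.len b) := by
  unfold τ
  have : Finset.univ.filter (fun b => T.perm.symm b < T.perm.symm (T.perm 0)) = ∅ := by
    apply Finset.filter_false_of_mem
    intro b _
    rw [Equiv.symm_apply_apply]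
    simp
  rw [this]
  simp

lemma tau_zero : T.τ 0 =
    ∑ b ∈ Finset.univ.filter (fun b => T.perm.symm b < T.perm.symm 0), T.len b := by
  unfold τ
  rw [filter_lt_zero_Fin]
  simp

variable (hlen : T.len 0 = T.len (T.perm 0)) (hne : T.perm 0 ≠ 0)

include hlen in
lemma tau_merged_of_ne {a : Fin (n + 1)} (ha : a.succ ≠ T.perm 0) :
    (T.merged).τ a = T.τ a.succ := by
  rw [T.merged_tau hlen]
  unfold τ
  have : T.sigma.symm a.succ = T.perm.symm a.succ := by
    rw [sigma_symm_apply, Equiv.swap_apply_of_ne_of_ne (Fin.succ_ne_zero a) ha]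
  rw [this]

include hlen in
lemma tau_merged_of_eq {a : Fin (n + 1)} (ha : a.succ = T.perm 0) :
    (T.merged).τ a = T.τ (T.perm 0) + T.τ 0 := by
  rw [T.merged_tau hlen, ha, tau_perm_zero, tau_zero]
  have : T.sigma.symm (T.perm 0) = T.perm.symm 0 := by
    rw [sigma_symm_apply, Equiv.swap_apply_right]
  rw [this]
  ring

lemma ileft_perm_zero : T.ileft (T.perm 0) = T.l := by
  unfold ileft
  have : Finset.univ.filter (fun b => T.perm.symm b < T.perm.symm (T.perm 0)) = ∅ := by
    apply Finset.filter_false_of_mem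
    intro b _
    rw [Equiv.symm_apply_apply]
    simp
  rw [this]
  simp

include hlen in
lemma map_mem_seg_zero {x : ℝ} (hx : x ∈ T.seg (T.perm 0)) : T.map x ∈ T.seg 0 := by
  have h := T.map_mem_Ico hx
  rw [T.ileft_perm_zero] at h
  rw [seg_zero]
  rw [← hlen] at h
  exact h

include hne hlen in
lemma ileft_ge {a : Fin (n + 2)} (ha : a ≠ T.perm 0) : T.l + T.len 0 ≤ T.ileft a := by
  unfold ileft
  have hmem : T.perm 0 ∈ Finset.univ.filter (fun b => T.perm.symm b < T.perm.symm a) := by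
    simp only [Finset.mem_filter, Finset.mem_univ, true_and, Equiv.symm_apply_apply]
    apply Fin.pos_of_ne_zero
    intro h
    apply ha
    rw [← h, Equiv.apply_symm_apply]
  have := Finset.single_le_sum (f := T.len) (fun b _ => T.len_nonneg b) hmem
  have h0 : T.len 0 ≤ T.len (T.perm 0) := hlen.le
  linarith

include hne hlen in
lemma map_mem_I' {a : Fin (n + 2)} {x : ℝ} (ha : a ≠ T.perm 0) (hx : x ∈ T.seg a) :
    T.map x ∈ Set.Ico (T.l + T.len 0) T.right := by
  have h := T.map_mem_Ico hx
  exact ⟨(T.ileft_ge hlen hne ha).trans h.1, h.2.trans_le (T.ileft_add_len_le a)⟩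

lemma I'_subset_domain : Set.Ico (T.l + T.len 0) T.right ⊆ T.domain := by
  intro x hx
  exact ⟨le_trans (by linarith [T.len_pos 0]) hx.1, hx.2⟩

lemma notMem_seg_zero {x : ℝ} (hx : x ∈ Set.Ico (T.l + T.len 0) T.right) : x ∉ T.seg 0 := by
  rw [seg_zero]
  intro h
  exact absurd (h.2.trans_le hx.1) (lt_irrefl x)

lemma exists_seg_I' {x : ℝ} (hx : x ∈ Set.Ico (T.l + T.len 0) T.right) :
    ∃ a : Fin (n + 1), x ∈ T.seg a.succ := by
  obtain ⟨a, ha⟩ := T.exists_seg (T.I'_subset_domain hx)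
  have h0 : a ≠ 0 := by
    rintro rfl
    exact T.notMem_seg_zero hx ha
  exact ⟨a.pred h0, by rwa [Fin.succ_pred]⟩

lemma merged_domain : (T.merged).domain = Set.Ico (T.l + T.len 0) T.right := by
  unfold domain
  rw [merged_right]
  rfl

open scoped Classical in
include hlen hne in
lemma merged_map_eq {x : ℝ} (hx : x ∈ Set.Ico (T.l + T.len 0) T.right) :
    (T.merged).map x = if x ∈ T.seg (T.perm 0) then T.map (T.map x) else T.map x := by
  obtain ⟨a, ha⟩ := T.exists_seg_I' hx
  have hm : x ∈ (T.merged).seg a := by rw [merged_seg]; exact ha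
  rw [(T.merged).map_of_mem hm]
  rcases eq_or_ne a.succ (T.perm 0) with hc | hc
  · rw [if_pos (hc ▸ ha)]
    have h1 : T.map x = x + T.τ (T.perm 0) := by rw [T.map_of_mem ha, hc]
    have h2 : T.map x ∈ T.seg 0 := T.map_mem_seg_zero hlen (hc ▸ ha)
    rw [T.map_of_mem h2, h1, T.tau_merged_of_eq hlen hc]
    ring
  · rw [if_neg (fun h => hc (T.seg_unique ha h)), T.map_of_mem ha,
      T.tau_merged_of_ne hlen hc]

include hlen hne in
lemma merged_map_mem_I' {x : ℝ} (hx : x ∈ Set.Ico (T.l + T.len 0) T.right) :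
    (T.merged).map x ∈ Set.Ico (T.l + T.len 0) T.right := by
  rw [← merged_domain] at hx ⊢
  exact (T.merged).map_mem_domain hx

include hlen hne in
lemma merged_iter_mem_I' {x : ℝ} (hx : x ∈ Set.Ico (T.l + T.len 0) T.right) (m : ℕ) :
    (T.merged).map^[m] x ∈ Set.Ico (T.l + T.len 0) T.right := by
  induction m with
  | zero => exact hx
  | succ k ih => rw [Function.iterate_succ_apply']; exact T.merged_map_mem_I' hlen hne ih

end IET

namespace IET
variable {n : ℕ} (T : IET (Fin (n + 2)))

open scoped Classical in
/-- the coded word of length-`m` merged orbit -/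
noncomputable def word (x : ℝ) (m : ℕ) : List (Fin (n + 2)) :=
  (List.range m).flatMap fun i =>
    if ((T.merged).traj x i).succ = T.perm 0 then [T.perm 0, 0]
    else [((T.merged).traj x i).succ]

open scoped Classical in
lemma word_succ (x : ℝ) (m : ℕ) :
    T.word x (m + 1) = T.word x m ++
      (if ((T.merged).traj x m).succ = T.perm 0 then [T.perm 0, 0]
       else [((T.merged).traj x m).succ]) := by
  rw [word, List.range_succ, List.flatMap_append]
  simp [word]

variable (hlen : T.len 0 = T.len (T.perm 0)) (hne : T.perm 0 ≠ 0)

include hlen hne in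
lemma word_spec {x : ℝ} (hx : x ∈ Set.Ico (T.l + T.len 0) T.right) (m : ℕ) :
    T.map^[(T.word x m).length] x = (T.merged).map^[m] x ∧
    ∀ (i : ℕ) (hi : i < (T.word x m).length), (T.word x m)[i] = T.traj x i := by
  classical
  induction m with
  | zero =>
    constructor
    · simp [word]
    · intro i hi
      simp [word] at hi
  | succ m ih =>
    obtain ⟨hiter, hget⟩ := ih
    set y := (T.merged).map^[m] x with hy
    have hyI : y ∈ Set.Ico (T.l + T.len 0) T.right := T.merged_iter_mem_I' hlen hne hx m
    obtain ⟨a, hya⟩ := T.exists_seg_I' hyI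
    have hidx : (T.merged).traj x m = a := by
      rw [traj, ← hy]
      exact (T.merged).idx_of_mem (by rw [merged_seg]; exact hya)
    have hmm : (T.merged).map y = if y ∈ T.seg (T.perm 0) then T.map (T.map y) else T.map y :=
      T.merged_map_eq hlen hne hyI
    have hiter1 : T.map^[(T.word x m).length + 1] x = T.map y := by
      rw [Function.iterate_succ_apply', hiter]
    rw [word_succ, hidx]
    rcases eq_or_ne a.succ (T.perm 0) with hc | hc
    · rw [if_pos hc]
      have hyc : y ∈ T.seg (T.perm 0) := hc ▸ hya
      have h1 : T.map y ∈ T.seg 0 := T.map_mem_seg_zero hlen hyc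
      have hiter2 : T.map^[(T.word x m).length + 2] x = (T.merged).map^[m + 1] x := by
        rw [Function.iterate_succ_apply' (T.merged).map, ← hy, hmm, if_pos hyc]
        rw [show (T.word x m).length + 2 = ((T.word x m).length + 1) + 1 from rfl,
          Function.iterate_succ_apply', hiter1]
      constructor
      · simpa using hiter2
      · intro i hi
        simp only [List.length_append, List.length_cons, List.length_nil] at hi
        rcases lt_or_ge i (T.word x m).length with h | h
        · rw [List.getElem_append_left h]
          exact hget i h
        · rw [List.getElem_append_right h]
          rcases (by omega : i = (T.word x m).length ∨ i = (T.word x m).length + 1) with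
            rfl | rfl
          · simp only [Nat.sub_self, List.getElem_cons_zero]
            rw [traj, hiter]
            exact (T.idx_of_mem hyc).symm
          · simp only [Nat.add_sub_cancel_left, List.getElem_cons_succ,
              List.getElem_cons_zero]
            rw [traj, hiter1]
            exact (T.idx_of_mem h1).symm
    · rw [if_neg hc]
      have hyn : y ∉ T.seg (T.perm 0) := fun h => hc (T.seg_unique hya h)
      constructor
      · simp only [List.length_append, List.length_cons, List.length_nil]
        rw [Function.iterate_succ_apply' (T.merged).map, ← hy, hmm, if_neg hyn]
        simpa using hiter1
      · intro i hi
        simp only [List.length_append, List.length_cons, List.length_nil] at hi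
        rcases lt_or_ge i (T.word x m).length with h | h
        · rw [List.getElem_append_left h]
          exact hget i h
        · rw [List.getElem_append_right h]
          have : i = (T.word x m).length := by omega
          subst this
          simp only [Nat.sub_self, List.getElem_cons_zero]
          rw [traj, hiter]
          exact (T.idx_of_mem hya).symm

end IET

open scoped Classical in
/-- Left merging step: if the first interval and its image-first interval have equal lengths,
the map induced on `[ℓ + |I_{a_1}|, r)` (doubling `T` on `I_{π(a_1)}`) is the first-return
map of `T`, is a `(k-1)`-IET over `A' = A \ {a_1}` with the prescribed permutation, and
trajectories are related by the morphism `φ : π(a_1) ↦ π(a_1)a_1`. -/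
theorem left_merging_step {n : ℕ} (T : IET (Fin (n + 2)))
    (hlen : T.len 0 = T.len (T.perm 0))
    (hne : T.perm 0 ≠ 0) :
    let a1 : Fin (n + 2) := 0
    let I' : Set ℝ := Set.Ico (T.l + T.len a1) T.right
    let T' : ℝ → ℝ := fun x => if x ∈ T.seg (T.perm a1) then T.map (T.map x) else T.map x
    -- (1) `T'` is the first-return map of `T` to `I'`
    (∀ x ∈ I', (∃ m : ℕ, 0 < m ∧ T.map^[m] x ∈ I') ∧ firstReturn T.map I' x = T' x) ∧
    -- (2) `T'` is a `(k-1)`-IET on `I'` with partition `(I_a)_{a ∈ A'}` and permutation `π'`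
    (∃ S : IET (Fin (n + 1)),
      S.l = T.l + T.len a1 ∧
      (∀ a : Fin (n + 1), S.len a = T.len a.succ) ∧
      (∀ a : Fin (n + 1), (S.perm a).succ =
          (if a.succ = T.perm.symm a1 then T.perm a1 else T.perm a.succ)) ∧
      (∀ x ∈ I', S.map x = T' x) ∧
      -- (3) `Ω_T(x) = φ(Ω_{T'}(x))`
      (∀ x ∈ I', ∀ m : ℕ,
        SeqPrefix
          ((List.range m).flatMap fun i =>
            if (S.traj x i).succ = T.perm a1 then [T.perm a1, a1]
            else [(S.traj x i).succ])
          (T.traj x))) := by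
  intro a1 I' T'
  constructor
  · -- part (1)
    intro x hx
    obtain ⟨a, ha⟩ := T.exists_seg_I' hx
    rcases eq_or_ne a.succ (T.perm 0) with hc | hc
    · have hyc : x ∈ T.seg (T.perm 0) := hc ▸ ha
      have h1 : T.map x ∈ T.seg 0 := T.map_mem_seg_zero hlen hyc
      have h1n : T.map x ∉ I' := fun hmem => T.notMem_seg_zero hmem h1
      have h2 : T.map (T.map x) ∈ I' :=
        T.map_mem_I' hlen hne (Ne.symm hne) h1
      have hit2 : T.map^[2] x = T.map (T.map x) := rfl
      have hex : ∃ m : ℕ, 0 < m ∧ T.map^[m] x ∈ I' := ⟨2, by norm_num, hit2 ▸ h2⟩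
      refine ⟨hex, ?_⟩
      have hfind : Nat.find hex = 2 := by
        rw [Nat.find_eq_iff]
        refine ⟨⟨by norm_num, hit2 ▸ h2⟩, ?_⟩
        intro m hm
        interval_cases m
        · simp
        · simp only [Function.iterate_one]
          tauto
      have hrt : returnTime T.map I' x = 2 := by
        rw [returnTime, dif_pos hex]
        convert hfind using 2
      rw [firstReturn, hrt, hit2]
      exact (if_pos hyc).symm
    · have h1 : T.map x ∈ I' := T.map_mem_I' hlen hne hc ha
      have hex : ∃ m : ℕ, 0 < m ∧ T.map^[m] x ∈ I' :=
        ⟨1, one_pos, by simpa using h1⟩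
      refine ⟨hex, ?_⟩
      have hfind : Nat.find hex = 1 := by
        rw [Nat.find_eq_iff]
        refine ⟨⟨one_pos, by simpa using h1⟩, ?_⟩
        intro m hm
        interval_cases m
        simp
      have hrt : returnTime T.map I' x = 1 := by
        rw [returnTime, dif_pos hex]
        convert hfind using 2
      rw [firstReturn, hrt, Function.iterate_one]
      exact (if_neg (fun h => hc (T.seg_unique ha h))).symm
  · -- parts (2) and (3)
    refine ⟨T.merged, rfl, fun a => rfl, ?_, ?_, ?_⟩
    · intro a
      have hms : (T.merged.perm a).succ = T.sigma a.succ := T.mperm_succ a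
      rw [hms, IET.sigma_apply]
      rcases eq_or_ne a.succ (T.perm.symm 0) with h | h
      · rw [if_pos h, h, Equiv.apply_symm_apply, Equiv.swap_apply_left]
      · rw [if_neg h]
        have h1 : T.perm a.succ ≠ 0 := by
          intro h0
          exact h (by rw [← h0, Equiv.symm_apply_apply])
        have h2 : T.perm a.succ ≠ T.perm 0 := by
          intro h0
          exact Fin.succ_ne_zero a (T.perm.injective h0)
        rw [Equiv.swap_apply_of_ne_of_ne h1 h2]
    · intro x hx
      exact T.merged_map_eq hlen hne hx
    · intro x hx m
      intro i
      have h2 := (T.word_spec hlen hne hx m).2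
      rw [List.get_eq_getElem]
      exact h2 i.1 i.2
end

section
/- Let w be a primitive word over an alphabet A, let a ∈ A, and let b be a letter distinct from a (with b either in A or a new letter not in A). Then α̃_{a,b}(w) is primitive, where α̃_{a,b} is the monoid morphism fixing every letter c ≠ a and sending a to the two-letter word ba. -/
/-!
The morphism `α̃_{a,b}` has a left inverse `alphaTildeInv a b`, which deletes every `b` standing
immediately before an `a`. This decoding is a morphism on concatenations `v ++ z` as long as `z`
does not start with `a`, since then no `ba` factor straddles the cut. An image `α̃_{a,b}(w)` never
starts with `a`, so if `α̃_{a,b}(w) = v^m`, decoding gives `w = (alphaTildeInv a b v)^m`, and the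
primitivity of `w` forces `m = 1`.
-/

lemma wordPow_nil {α : Type*} (m : ℕ) : wordPow ([] : List α) m = [] := by
  induction m with
  | zero => rfl
  | succ n ih => simp [wordPow, ih]

lemma head?_wordPow_succ {α : Type*} (v : List α) (n : ℕ) :
    (wordPow v (n + 1)).head? = v.head? := by
  cases v with
  | nil => simp [wordPow_nil]
  | cons c t => simp [wordPow]

section AlphaTilde

variable {α : Type*} [DecidableEq α]

def alphaTilde (a b : α) (w : List α) : List α :=
  w.flatMap fun c => if c = a then [b, a] else [c]

def alphaTildeInv (a b : α) : List α → List α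
  | [] => []
  | [c] => [c]
  | x :: y :: t =>
    if x = b ∧ y = a then a :: alphaTildeInv a b t else x :: alphaTildeInv a b (y :: t)

lemma alphaTilde_cons (a b c : α) (w : List α) :
    alphaTilde a b (c :: w) = (if c = a then [b, a] else [c]) ++ alphaTilde a b w :=
  List.flatMap_cons

lemma head?_alphaTilde_ne {a b : α} (hab : a ≠ b) (w : List α) :
    (alphaTilde a b w).head? ≠ some a := by
  cases w with
  | nil => simp [alphaTilde]
  | cons c t => by_cases hc : c = a <;> simp [alphaTilde_cons, hc, Ne.symm hab]

lemma alphaTildeInv_append (a b : α) {z : List α} (hz : z.head? ≠ some a) (v : List α) :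
    alphaTildeInv a b (v ++ z) = alphaTildeInv a b v ++ alphaTildeInv a b z := by
  induction v using alphaTildeInv.induct a b with
  | case1 => simp [alphaTildeInv]
  | case2 c =>
    cases z with
    | nil => simp [alphaTildeInv]
    | cons d t =>
      have hd : d ≠ a := by simpa using hz
      simp [alphaTildeInv, hd]
  | case3 x y t h ih => simp [alphaTildeInv, h, ih]
  | case4 x y t h ih =>
    simp only [List.cons_append] at ih
    simp only [List.cons_append, alphaTildeInv, if_neg h, ih]

lemma alphaTildeInv_alphaTilde {a b : α} (hab : a ≠ b) (w : List α) :
    alphaTildeInv a b (alphaTilde a b w) = w := by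
  induction w with
  | nil => simp [alphaTilde, alphaTildeInv]
  | cons c t ih =>
    by_cases hc : c = a
    · subst hc
      simp [alphaTilde_cons, alphaTildeInv, ih]
    · rw [alphaTilde_cons, if_neg hc, alphaTildeInv_append a b (head?_alphaTilde_ne hab t), ih]
      simp [alphaTildeInv]

lemma alphaTildeInv_wordPow (a b : α) {v : List α} {m : ℕ}
    (hv : (wordPow v m).head? ≠ some a) :
    alphaTildeInv a b (wordPow v m) = wordPow (alphaTildeInv a b v) m := by
  induction m with
  | zero => simp [wordPow, alphaTildeInv]
  | succ n ih =>
    have hn : (wordPow v n).head? ≠ some a := by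
      cases n with
      | zero => simp [wordPow]
      | succ k => rwa [head?_wordPow_succ, ← head?_wordPow_succ v (k + 1)]
    rw [wordPow, alphaTildeInv_append a b hn, ih hn, wordPow]

end AlphaTilde

/-- The image of a primitive word under the morphism `α̃_{a,b} : a ↦ ba` (fixing all other
letters) is primitive. -/
theorem primitive_alphaTilde {α : Type*} [DecidableEq α] (w : List α) (hw : Primitive w)
    (a b : α) (hab : a ≠ b) :
    Primitive (w.flatMap fun c => if c = a then [b, a] else [c]) := by
  intro v m hm
  have hv : (wordPow v m).head? ≠ some a := hm ▸ head?_alphaTilde_ne hab w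
  refine hw (alphaTildeInv a b v) m ?_
  rw [← alphaTildeInv_wordPow a b hv, ← hm]
  exact (alphaTildeInv_alphaTilde hab w).symm
end
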